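/- For an interval graph G and any k ≥ 1, the k-th power G^{*k} is a perfect graph. -/

import Mathlib

variable {V : Type*} [Fintype V] [DecidableEq V]

/-- `G` is an interval graph: the intersection graph of a family of
closed intervals on the real line. -/
def IsIntervalGraph (G : SimpleGraph V) : Prop :=
  ∃ f : V → ℝ × ℝ, (∀ v, (f v).1 ≤ (f v).2) ∧
    ∀ x y, x ≠ y →
      (G.Adj x y ↔ (Set.Icc (f x).1 (f x).2 ∩ Set.Icc (f y).1 (f y).2).Nonempty)

/-- The `k`-th power of `G`: distinct vertices adjacent iff at distance at most `k`. -/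
def powerGraph (G : SimpleGraph V) (k : ℕ) : SimpleGraph V where
  Adj x y := x ≠ y ∧ G.Reachable x y ∧ G.dist x y ≤ k
  symm := by
    constructor
    rintro x y ⟨h1, h2, h3⟩
    exact ⟨h1.symm, h2.symm, by rwa [SimpleGraph.dist_comm]⟩
  loopless := by constructor; rintro x ⟨h1, -⟩; exact h1 rfl

/-- A graph is perfect if every induced subgraph has chromatic number equal to
its clique number. -/
def IsPerfect {W : Type*} (G : SimpleGraph W) : Prop :=
  ∀ S : Set W, (G.induce S).chromaticNumber = ((G.induce S).cliqueNum : ℕ∞)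

/-
Let `[a_v, b_v]` be an interval model of `G` and `k ≥ 1`. Then `G^k` is modelled by
`[a_v, max {b_u | d(v, u) ≤ k - 1}]`: the intervals met along a walk cover a connected stretch of
the line, so if `a_x ≤ a_y` and `a_y` lies left of the right end `b_u` of some `u` at distance
`≤ k - 1` from `x`, then a shortest walk from `x` to `u` meets the interval of `y` at a vertex at
distance `≤ k - 1` from `x`, whence `d(x, y) ≤ k`.

Interval graphs are closed under taking induced subgraphs, and the neighbours of a vertex with the
rightmost left endpoint all contain that endpoint, hence form a clique. Colouring the vertices
greedily from left to right therefore uses no more colours than the clique number.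
-/

namespace SimpleGraph

variable {W : Type*} {G : SimpleGraph W}

theorem Colorable.of_induce_compl_singleton {v : W} [Fintype (G.neighborSet v)] {n : ℕ}
    (h : (G.induce {v}ᶜ).Colorable n) (hv : G.degree v < n) : G.Colorable n := by
  classical
  obtain ⟨C⟩ := h
  let used : Finset (Fin n) := Finset.univ.image fun u : G.neighborSet v ↦ C ⟨u, u.2.ne'⟩
  have hused : used.card < (Finset.univ : Finset (Fin n)).card := by
    calc used.card ≤ Fintype.card (G.neighborSet v) := Finset.card_image_le
      _ = G.degree v := G.card_neighborSet_eq_degree v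
      _ < _ := by simpa using hv
  obtain ⟨c, -, hc⟩ := Finset.exists_mem_notMem_of_card_lt_card hused
  have hc' : ∀ u (hu : G.Adj v u), C ⟨u, hu.ne'⟩ ≠ c := fun u hu h ↦
    hc (Finset.mem_image.2 ⟨⟨u, hu⟩, Finset.mem_univ _, h⟩)
  refine ⟨Coloring.mk (fun w ↦ if hw : w = v then c else C ⟨w, hw⟩) fun {a b} hab ↦ ?_⟩
  by_cases ha : a = v <;> by_cases hb : b = v
  · exact absurd (ha.trans hb.symm) hab.ne
  · subst ha; simpa [hb] using (hc' b hab).symm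
  · subst hb; simpa [ha] using hc' a hab.symm
  · simpa [ha, hb] using C.valid (show (G.induce {v}ᶜ).Adj ⟨a, ha⟩ ⟨b, hb⟩ from hab)

theorem degree_lt_cliqueNum_of_isClique_neighborSet [Finite W] {v : W} [Fintype (G.neighborSet v)]
    (h : G.IsClique (G.neighborSet v)) : G.degree v < G.cliqueNum := by
  classical
  have hclique : G.IsClique (insert v (G.neighborFinset v) : Finset W) := by
    rw [Finset.coe_insert, coe_neighborFinset, isClique_insert]
    exact ⟨h, fun u hu _ ↦ hu⟩
  have := hclique.card_le_cliqueNum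
  rwa [Finset.card_insert_of_notMem (by simp), card_neighborFinset_eq_degree] at this

/-- `f v = (a, b)` encodes the closed interval `[a, b]` assigned to `v`. -/
structure IsIntervalModel (G : SimpleGraph W) (f : W → ℝ × ℝ) : Prop where
  fst_le_snd : ∀ v, (f v).1 ≤ (f v).2
  adj_iff : ∀ x y, x ≠ y → (G.Adj x y ↔ (f y).1 ≤ (f x).2 ∧ (f x).1 ≤ (f y).2)

theorem _root_.IsIntervalGraph.exists_isIntervalModel {G : SimpleGraph W}
    (hG : IsIntervalGraph G) : ∃ f, G.IsIntervalModel f := by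
  obtain ⟨f, hf, hadj⟩ := hG
  refine ⟨f, hf, fun x y hxy ↦ ?_⟩
  rw [hadj x y hxy, Set.Icc_inter_Icc, Set.nonempty_Icc, sup_le_iff, le_inf_iff, le_inf_iff]
  exact ⟨fun h ↦ ⟨h.2.1, h.1.2⟩, fun h ↦ ⟨⟨hf x, h.2⟩, h.1, hf y⟩⟩

namespace IsIntervalModel

variable {f : W → ℝ × ℝ}

theorem eq_or_adj (hf : G.IsIntervalModel f) {x y : W} (h₁ : (f y).1 ≤ (f x).2)
    (h₂ : (f x).1 ≤ (f y).2) : x = y ∨ G.Adj x y := by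
  by_cases hxy : x = y
  · exact .inl hxy
  · exact .inr ((hf.adj_iff x y hxy).2 ⟨h₁, h₂⟩)

theorem induce (hf : G.IsIntervalModel f) (S : Set W) :
    (G.induce S).IsIntervalModel fun w ↦ f w :=
  ⟨fun w ↦ hf.fst_le_snd w, fun x y hxy ↦ hf.adj_iff x y (Subtype.coe_ne_coe.2 hxy)⟩

theorem isClique_neighborSet (hf : G.IsIntervalModel f) {v : W}
    (hv : ∀ u, (f u).1 ≤ (f v).1) : G.IsClique (G.neighborSet v) := by
  have hcontains : ∀ u, G.Adj v u → (f v).1 ≤ (f u).2 := fun u hu ↦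
    ((hf.adj_iff v u hu.ne).1 hu).2
  intro a ha b hb hab
  exact (hf.adj_iff a b hab).2
    ⟨(hv b).trans (hcontains a ha), (hv a).trans (hcontains b hb)⟩

theorem colorable_cliqueNum [Finite W] (hf : G.IsIntervalModel f) :
    G.Colorable G.cliqueNum := by
  induction hn : Nat.card W generalizing W with
  | zero =>
    have : IsEmpty W := (Finite.card_eq_zero_iff).1 hn
    exact .of_isEmpty _
  | succ n ih =>
    classical
    have : Nonempty W := Finite.card_pos_iff.1 (by omega)
    have : Fintype W := Fintype.ofFinite W
    obtain ⟨v, hv⟩ := Finite.exists_max fun w ↦ (f w).1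
    have hcard : Nat.card ({v}ᶜ : Set W) = n := by
      rw [Nat.card_coe_set_eq, Set.ncard_compl, Set.ncard_singleton]; omega
    have hcol := (ih (hf.induce {v}ᶜ) hcard).mono (G.cliqueNum_induce_le {v}ᶜ)
    exact hcol.of_induce_compl_singleton
      (degree_lt_cliqueNum_of_isClique_neighborSet (hf.isClique_neighborSet hv))

theorem chromaticNumber_eq_cliqueNum [Finite W] (hf : G.IsIntervalModel f) :
    G.chromaticNumber = G.cliqueNum :=
  le_antisymm hf.colorable_cliqueNum.chromaticNumber_le G.cliqueNum_le_chromaticNumber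

theorem exists_edist_le_length (hf : G.IsIntervalModel f) {x u : W} (p : G.Walk x u) {t : ℝ}
    (h₁ : (f x).1 ≤ t) (h₂ : t ≤ (f u).2) :
    ∃ w, (f w).1 ≤ t ∧ t ≤ (f w).2 ∧ G.edist x w ≤ p.length := by
  induction p with
  | nil => exact ⟨_, h₁, h₂, by simp⟩
  | @cons x z u hxz q ih =>
    by_cases hx : t ≤ (f x).2
    · exact ⟨x, h₁, hx, by simp⟩
    · have hz : (f z).1 ≤ t := ((hf.adj_iff x z hxz.ne).1 hxz).1.trans (not_le.1 hx).le
      obtain ⟨w, hw₁, hw₂, hw⟩ := ih hz h₂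
      refine ⟨w, hw₁, hw₂, ?_⟩
      calc G.edist x w ≤ G.edist x z + G.edist z w := G.edist_triangle
        _ ≤ 1 + q.length := add_le_add (edist_le_one_iff_adj_or_eq.2 (.inl hxz)) hw
        _ = (q.cons hxz).length := by simp [add_comm]

theorem edist_le_of_overlap (hf : G.IsIntervalModel f) {x y w : W} {k : ℕ∞}
    (hw : G.edist x w < k) (h₁ : (f y).1 ≤ (f w).2) (h₂ : (f w).1 ≤ (f y).2) : G.edist x y ≤ k :=
  calc G.edist x y ≤ G.edist x w + G.edist w y := G.edist_triangle
    _ ≤ G.edist x w + 1 := by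
      gcongr; exact edist_le_one_iff_adj_or_eq.2 (hf.eq_or_adj h₁ h₂).symm
    _ ≤ k := Order.add_one_le_of_lt hw

end IsIntervalModel

theorem _root_.powerGraph_adj_iff {k : ℕ} {x y : W} :
    (powerGraph G k).Adj x y ↔ x ≠ y ∧ G.edist x y ≤ k := by
  refine and_congr_right fun _ ↦ ⟨fun ⟨hr, hd⟩ ↦ ?_, fun h ↦ ?_⟩
  · rw [← hr.coe_dist_eq_edist]; exact_mod_cast hd
  · have hr : G.Reachable x y := edist_ne_top_iff_reachable.1 (h.trans_lt (by simp)).ne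
    rw [← hr.coe_dist_eq_edist] at h
    exact ⟨hr, by exact_mod_cast h⟩

/-- The model of `G^k`: `v` keeps its left endpoint and reaches the right end of every interval
within distance `k - 1` of `v` (`G.ball v k` is the open ball). -/
noncomputable def powerModel (G : SimpleGraph W) (f : W → ℝ × ℝ) (k : ℕ) (v : W) : ℝ × ℝ :=
  ((f v).1, sSup ((fun u ↦ (f u).2) '' G.ball v k))

section powerModel

variable [Finite W] {f : W → ℝ × ℝ} {k : ℕ} {u v x y : W}

theorem le_powerModel_snd (hu : u ∈ G.ball v k) : (f u).2 ≤ (powerModel G f k v).2 :=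
  le_csSup (Set.toFinite _).bddAbove (Set.mem_image_of_mem _ hu)

theorem exists_mem_ball_eq_powerModel_snd (hk : 0 < k) :
    ∃ u ∈ G.ball v k, (f u).2 = (powerModel G f k v).2 :=
  ((Set.image_nonempty.2 ⟨v, mem_ball_self (by exact_mod_cast hk)⟩).csSup_mem
    (Set.toFinite _))

namespace IsIntervalModel

theorem fst_le_powerModel_snd (hf : G.IsIntervalModel f) (h : (powerGraph G k).Adj x y) :
    (f y).1 ≤ (powerModel G f k x).2 := by
  obtain ⟨hxy, hd⟩ := powerGraph_adj_iff.1 h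
  have hr : G.Reachable y x := edist_ne_top_iff_reachable.1 (by
    rw [edist_comm]; exact (hd.trans_lt (by simp)).ne)
  obtain ⟨p, hp⟩ := hr.exists_walk_length_eq_edist
  cases p with
  | nil => exact absurd rfl hxy
  | @cons _ z _ hyz q =>
    refine ((hf.adj_iff y z hyz.ne).1 hyz).2.trans (le_powerModel_snd ?_)
    rw [edist_comm, ← hp, Walk.length_cons] at hd
    calc G.edist z x ≤ q.length := edist_le q
      _ < k := by exact_mod_cast hd

theorem edist_le_of_fst_le (hf : G.IsIntervalModel f) (hk : 0 < k) (hxy : (f x).1 ≤ (f y).1)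
    (hy : (f y).1 ≤ (powerModel G f k x).2) : G.edist x y ≤ k := by
  obtain ⟨u, hu, hux⟩ := exists_mem_ball_eq_powerModel_snd (G := G) (f := f) (v := x) hk
  rw [← hux] at hy
  rw [mem_ball, edist_comm] at hu
  by_cases hmeet : (f u).1 ≤ (f y).2
  · exact hf.edist_le_of_overlap hu hy hmeet
  · have hyu : (f y).2 ≤ (f u).2 := (not_le.1 hmeet).le.trans (hf.fst_le_snd u)
    obtain ⟨p, hp⟩ := (reachable_of_edist_ne_top hu.ne_top).exists_walk_length_eq_edist
    obtain ⟨w, hw₁, hw₂, hw⟩ :=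
      hf.exists_edist_le_length p (hxy.trans (hf.fst_le_snd y)) hyu
    exact hf.edist_le_of_overlap ((hp ▸ hw).trans_lt hu) ((hf.fst_le_snd y).trans hw₂) hw₁

theorem powerGraph (hf : G.IsIntervalModel f) (hk : 0 < k) :
    (powerGraph G k).IsIntervalModel (powerModel G f k) where
  fst_le_snd v :=
    (hf.fst_le_snd v).trans (le_powerModel_snd (mem_ball_self (by exact_mod_cast hk)))
  adj_iff x y hxy := by
    refine ⟨fun h ↦ ⟨hf.fst_le_powerModel_snd h, hf.fst_le_powerModel_snd h.symm⟩,
      fun ⟨h₁, h₂⟩ ↦ powerGraph_adj_iff.2 ⟨hxy, ?_⟩⟩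
    rcases le_total (f x).1 (f y).1 with h | h
    · exact hf.edist_le_of_fst_le hk h h₁
    · rw [edist_comm]; exact hf.edist_le_of_fst_le hk h h₂

end IsIntervalModel

end powerModel

end SimpleGraph

open SimpleGraph

theorem stmt16 (G : SimpleGraph V) (hG : IsIntervalGraph G) (k : ℕ) (hk : 1 ≤ k) :
    IsPerfect (powerGraph G k) := by
  obtain ⟨f, hf⟩ := hG.exists_isIntervalModel
  exact fun S ↦ ((hf.powerGraph hk).induce S).chromaticNumber_eq_cliqueNum
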